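/- Let $A$ be the generator of a strongly continuous group $\Sigma(t)$ on a Hilbert space $H$. If $U \in C^0(\mathbf{R}, H)$ satisfies $U(0) = U_0$ and, for every $\psi \in C_0^1(\mathbf{R})$, $\int \psi(t) U(t)\,dt \in D(A)$ with $A\big(\int \psi(t) U(t)\,dt\big) = -\int \psi'(t) U(t)\,dt$, then $U(t) = \Sigma(t) U_0$ for all $t$. In particular such a $U$ is unique. -/

import Mathlib

open MeasureTheory Filter Topology Metric Set Function

section Stmt3Aux

variable {H : Type*} [NormedAddCommGroup H] [NormedSpace ℝ H] [CompleteSpace H]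

lemma stmt3_int (U : ℝ → H) (hUcont : Continuous U) (ψ : ℝ → ℝ)
    (hψcont : Continuous ψ) (hψc : HasCompactSupport ψ) (t : ℝ) :
    Integrable (fun s : ℝ => ψ (s - t) • U s) := by
  have hc : Continuous fun s : ℝ => ψ (s - t) • U s :=
    (hψcont.comp (continuous_id.sub continuous_const)).smul hUcont
  have hcs : HasCompactSupport fun s : ℝ => ψ (s - t) • U s := by
    have h1 : HasCompactSupport fun s : ℝ => ψ (s - t) :=
      hψc.comp_homeomorph (Homeomorph.subRight t)
    exact h1.smul_right
  exact hc.integrable_of_hasCompactSupport hcs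

lemma stmt3_hasDerivAt_W (U : ℝ → H) (hUcont : Continuous U) (ψ : ℝ → ℝ)
    (hψ : ContDiff ℝ 1 ψ) (hψc : HasCompactSupport ψ) (t : ℝ) :
    HasDerivAt (fun u => ∫ s : ℝ, ψ (s - u) • U s) (-∫ s : ℝ, deriv ψ (s - t) • U s) t := by
  have hψ' : Continuous (deriv ψ) := hψ.continuous_deriv le_rfl
  obtain ⟨C, hC⟩ := hψ'.norm.bounded_above_of_compact_support hψc.deriv.norm
  obtain ⟨R, hR⟩ := hψc.deriv.isCompact.isBounded.subset_closedBall 0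
  -- the derivative statement via dominated convergence
  have key := hasDerivAt_integral_of_dominated_loc_of_deriv_le (μ := volume)
    (F := fun u s => ψ (s - u) • U s)
    (F' := fun u s => (deriv ψ (s - u) * (-1)) • U s)
    (x₀ := t) (s := Metric.ball t 1) (Metric.ball_mem_nhds t one_pos)
    (bound := Set.indicator (Metric.closedBall t (R + 1)) fun s => C * ‖U s‖)
    ?meas ?hint ?meas' ?bound ?bint ?diff
  · have h2 : (∫ s : ℝ, (deriv ψ (s - t) * (-1)) • U s) = -∫ s : ℝ, deriv ψ (s - t) • U s := by
      rw [← integral_neg]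
      congr 1; ext s; rw [mul_neg_one, neg_smul]
    rw [h2] at key
    exact key.2
  case meas =>
    filter_upwards with u
    exact (stmt3_int U hUcont ψ hψ.continuous hψc u).aestronglyMeasurable
  case hint => exact stmt3_int U hUcont ψ hψ.continuous hψc t
  case meas' =>
    apply Continuous.aestronglyMeasurable
    exact (((hψ'.comp (continuous_id.sub continuous_const)).mul continuous_const).smul hUcont)
  case bound =>
    filter_upwards with s
    intro u hu
    rw [norm_smul]
    by_cases hs : s ∈ Metric.closedBall t (R + 1)
    · rw [Set.indicator_of_mem hs]
      have := hC (s - u)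
      rw [norm_norm] at this
      calc ‖deriv ψ (s - u) * (-1)‖ * ‖U s‖ = ‖deriv ψ (s - u)‖ * ‖U s‖ := by
            rw [norm_mul, norm_neg, norm_one, mul_one]
        _ ≤ C * ‖U s‖ := by
            apply mul_le_mul_of_nonneg_right this (norm_nonneg _)
    · rw [Set.indicator_of_notMem hs]
      have hzero : deriv ψ (s - u) = 0 := by
        by_contra hne
        have hmem : s - u ∈ tsupport (deriv ψ) :=
          subset_tsupport _ hne
        have : ‖s - u‖ ≤ R := by
          have := hR hmem
          simpa [Metric.mem_closedBall, Real.dist_eq, abs_sub_comm] using this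
        apply hs
        rw [Metric.mem_closedBall, Real.dist_eq]
        have h1 : |s - t| ≤ |s - u| + |u - t| := abs_sub_le s u t
        have h2 : |u - t| ≤ 1 := by
          have := Metric.mem_ball.mp hu
          rw [Real.dist_eq] at this
          linarith
        have h3 : |s - u| ≤ R := by rwa [Real.norm_eq_abs] at this
        linarith
      simp [hzero]
  case bint =>
    rw [integrable_indicator_iff measurableSet_closedBall]
    exact (continuous_const.mul hUcont.norm).continuousOn.integrableOn_compact (isCompact_closedBall _ _)
  case diff =>
    filter_upwards with s
    intro u hu
    have hinner : HasDerivAt (fun u : ℝ => s - u) (-1) u := (hasDerivAt_id u).const_sub s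
    have houter : HasDerivAt ψ (deriv ψ (s - u)) (s - u) :=
      ((hψ.differentiable one_ne_zero) (s - u)).hasDerivAt
    exact (houter.comp u hinner).smul_const (U s)

lemma stmt3_sg_bound (Sg : ℝ → H →L[ℝ] H) (hScont : ∀ x : H, Continuous fun t => Sg t x)
    (a b : ℝ) : ∃ M : ℝ, 0 ≤ M ∧ ∀ s ∈ Set.Icc a b, ‖Sg s‖ ≤ M := by
  have h : ∀ x : H, ∃ C, ∀ i : Set.Icc a b, ‖(fun i : Set.Icc a b => Sg i) i x‖ ≤ C := by
    intro x
    obtain ⟨C, hC⟩ := (isCompact_Icc (a := a) (b := b)).exists_bound_of_continuousOn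
      ((hScont x).continuousOn)
    exact ⟨C, fun i => hC i i.2⟩
  obtain ⟨C', hC'⟩ := banach_steinhaus h
  exact ⟨max C' 0, le_max_right _ _, fun s hs => le_max_of_le_left (hC' ⟨s, hs⟩)⟩

/-- If `W` is differentiable with `W' = A ∘ W`, `W t ∈ DA`, then `W τ = Sg τ (W 0)`. -/
lemma stmt3_ode (Sg : ℝ → H →L[ℝ] H)
    (hS0 : Sg 0 = ContinuousLinearMap.id ℝ H)
    (hSadd : ∀ s t : ℝ, Sg (s + t) = (Sg s).comp (Sg t))
    (hScont : ∀ x : H, Continuous fun t => Sg t x)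
    (A : H → H) (W : ℝ → H)
    (hW : ∀ t, HasDerivAt W (A (W t)) t)
    (hAW : ∀ t, HasDerivAt (fun h => Sg h (W t)) (A (W t)) 0)
    (τ : ℝ) : W τ = Sg τ (W 0) := by
  set g : ℝ → H := fun t => Sg (τ - t) (W t) with hg
  have hgderiv : ∀ t, HasDerivAt g 0 t := by
    intro t
    obtain ⟨M, hM0, hM⟩ := stmt3_sg_bound Sg hScont (τ - t - 1) (τ - t + 1)
    rw [hasDerivAt_iff_tendsto_slope]
    set σ : ℝ → H := fun h => Sg h (W t) with hσdef
    set v : ℝ → H := fun u => slope W t u - slope σ 0 (u - t) with hv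
    have hsub : Tendsto (fun u : ℝ => u - t) (𝓝[≠] t) (𝓝[≠] (0 : ℝ)) := by
      apply tendsto_nhdsWithin_of_tendsto_nhds_of_eventually_within
      · have : Tendsto (fun u : ℝ => u - t) (𝓝 t) (𝓝 (t - t)) :=
          ((continuous_id.sub continuous_const).tendsto t)
        simpa using this.mono_left nhdsWithin_le_nhds
      · exact eventually_mem_nhdsWithin.mono fun u hu => sub_ne_zero.2 hu
    have hvlim : Tendsto v (𝓝[≠] t) (𝓝 0) := by
      have t1 : Tendsto (slope W t) (𝓝[≠] t) (𝓝 (A (W t))) :=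
        hasDerivAt_iff_tendsto_slope.mp (hW t)
      have t2 : Tendsto (fun u => slope σ 0 (u - t)) (𝓝[≠] t) (𝓝 (A (W t))) :=
        (hasDerivAt_iff_tendsto_slope.mp (hAW t)).comp hsub
      simpa using t1.sub t2
    have heq : ∀ u : ℝ, u ≠ t → slope g t u = Sg (τ - u) (v u) := by
      intro u hu
      have hvu : v u = (u - t)⁻¹ • (W u - Sg (u - t) (W t)) := by
        simp only [hv, slope_def_field, slope, hσdef, hS0, vsub_eq_sub, sub_zero,
          ContinuousLinearMap.id_apply, ← smul_sub]
        congr 1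
        abel
      have hcomp : Sg (τ - t) (W t) = Sg (τ - u) (Sg (u - t) (W t)) := by
        have : τ - t = (τ - u) + (u - t) := by ring
        rw [this, hSadd]; rfl
      have : slope g t u = (u - t)⁻¹ • (Sg (τ - u) (W u) - Sg (τ - u) (Sg (u - t) (W t))) := by
        rw [slope, vsub_eq_sub, hg]
        simp only [← hcomp]
      rw [this, ← map_sub, hvu, (Sg (τ - u)).map_smul]
    apply squeeze_zero_norm'
      (a := fun u => M * ‖v u‖)
    · have h1 : ∀ᶠ u in 𝓝 t, u ∈ Metric.ball t 1 := by
        have := Metric.ball_mem_nhds t one_pos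
        exact this
      filter_upwards [eventually_nhdsWithin_of_eventually_nhds h1,
        eventually_mem_nhdsWithin] with u hu1 hu2
      rw [heq u hu2]
      calc ‖Sg (τ - u) (v u)‖ ≤ ‖Sg (τ - u)‖ * ‖v u‖ := (Sg (τ - u)).le_opNorm _
        _ ≤ M * ‖v u‖ := by
            apply mul_le_mul_of_nonneg_right _ (norm_nonneg _)
            apply hM
            have hlt : |u - t| < 1 := by
              have := Metric.mem_ball.mp hu1
              rwa [Real.dist_eq] at this
            obtain ⟨ha, hb⟩ := abs_lt.mp hlt
            exact Set.mem_Icc.mpr ⟨by linarith, by linarith⟩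
    · simpa using hvlim.norm.const_mul M
  have hconst : g τ = g 0 := by
    apply is_const_of_deriv_eq_zero
    · exact fun t => (hgderiv t).differentiableAt
    · exact fun t => (hgderiv t).deriv
  have h1 : g τ = W τ := by simp [hg, hS0]
  have h2 : g 0 = Sg τ (W 0) := by simp [hg]
  rw [← h1, hconst, h2]

lemma stmt3_key (Sg : ℝ → H →L[ℝ] H)
    (hS0 : Sg 0 = ContinuousLinearMap.id ℝ H)
    (hSadd : ∀ s t : ℝ, Sg (s + t) = (Sg s).comp (Sg t))
    (hScont : ∀ x : H, Continuous fun t => Sg t x)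
    (DA : Set H) (A : H → H)
    (hA : ∀ x ∈ DA, HasDerivAt (fun t => Sg t x) (A x) 0)
    (U : ℝ → H) (hUcont : Continuous U)
    (hweak : ∀ ψ : ℝ → ℝ, ContDiff ℝ 1 ψ → HasCompactSupport ψ →
      (∫ t : ℝ, ψ t • U t) ∈ DA ∧
        A (∫ t : ℝ, ψ t • U t) = -∫ t : ℝ, deriv ψ t • U t)
    (ψ : ℝ → ℝ) (hψ : ContDiff ℝ 1 ψ) (hψc : HasCompactSupport ψ) (τ : ℝ) :
    (∫ s : ℝ, ψ (s - τ) • U s) = Sg τ (∫ s : ℝ, ψ s • U s) := by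
  set W : ℝ → H := fun t => ∫ s : ℝ, ψ (s - t) • U s with hWdef
  have hψt : ∀ t : ℝ, ContDiff ℝ 1 (fun s : ℝ => ψ (s - t)) :=
    fun t => hψ.comp ((contDiff_id.sub contDiff_const))
  have hψtc : ∀ t : ℝ, HasCompactSupport (fun s : ℝ => ψ (s - t)) :=
    fun t => hψc.comp_homeomorph (Homeomorph.subRight t)
  have hd : ∀ t s : ℝ, deriv (fun s : ℝ => ψ (s - t)) s = deriv ψ (s - t) := by
    intro t s
    have hinner : HasDerivAt (fun s : ℝ => s - t) 1 s := (hasDerivAt_id s).sub_const t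
    have houter : HasDerivAt ψ (deriv ψ (s - t)) (s - t) :=
      ((hψ.differentiable one_ne_zero) (s - t)).hasDerivAt
    have h := (houter.comp s hinner).deriv
    simpa [Function.comp_def] using h
  have hmem : ∀ t, W t ∈ DA := fun t => (hweak _ (hψt t) (hψtc t)).1
  have hAW_eq : ∀ t, A (W t) = -∫ s : ℝ, deriv ψ (s - t) • U s := by
    intro t
    have h := (hweak _ (hψt t) (hψtc t)).2
    have h2 : (fun s : ℝ => deriv (fun s : ℝ => ψ (s - t)) s • U s)
        = fun s : ℝ => deriv ψ (s - t) • U s := by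
      funext s; rw [hd]
    rw [h2] at h
    exact h
  have hW : ∀ t, HasDerivAt W (A (W t)) t := by
    intro t; rw [hAW_eq t]; exact stmt3_hasDerivAt_W U hUcont ψ hψ hψc t
  have hkey := stmt3_ode Sg hS0 hSadd hScont A W hW (fun t => hA _ (hmem t)) τ
  simpa [hWdef] using hkey

lemma stmt3_approx (U : ℝ → H) (hUcont : Continuous U)
    (φ : ℕ → ContDiffBump (0 : ℝ))
    (hφ : ∀ n, (φ n).rOut = ((n : ℝ) + 1)⁻¹) (p : ℝ) :
    Tendsto (fun n => ∫ s : ℝ, (φ n).normed volume (s - p) • U s) atTop (𝓝 (U p)) := by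
  rw [Metric.tendsto_atTop]
  intro ε hε
  obtain ⟨δ, hδ0, hδ⟩ := Metric.continuousAt_iff.mp (hUcont.continuousAt (x := p))
    (ε / 2) (half_pos hε)
  obtain ⟨N, hN⟩ := exists_nat_gt δ⁻¹
  refine ⟨N, fun n hn => ?_⟩
  set ψ : ℝ → ℝ := (φ n).normed volume with hψdef
  have hψcont : Continuous ψ := (φ n).contDiff_normed (n := 0).continuous
  have hψcs : HasCompactSupport ψ := (φ n).hasCompactSupport_normed
  have hrout : (φ n).rOut < δ := by
    rw [hφ n]
    have h1 : δ⁻¹ < (n : ℝ) + 1 := by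
      calc δ⁻¹ < (N : ℝ) := hN
        _ ≤ (n : ℝ) := by exact_mod_cast hn
        _ < (n : ℝ) + 1 := by linarith
    calc ((n : ℝ) + 1)⁻¹ < (δ⁻¹)⁻¹ := by
          apply inv_strictAnti₀ (by positivity) h1
      _ = δ := inv_inv δ
  -- translated bump is integrable, with integral 1
  have hInt1 : Integrable (fun s : ℝ => ψ (s - p)) := by
    have hc : Continuous fun s : ℝ => ψ (s - p) :=
      hψcont.comp (continuous_id.sub continuous_const)
    have hcs : HasCompactSupport fun s : ℝ => ψ (s - p) :=
      hψcs.comp_homeomorph (Homeomorph.subRight p)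
    exact hc.integrable_of_hasCompactSupport hcs
  have hint1 : (∫ s : ℝ, ψ (s - p)) = 1 := by
    rw [integral_sub_right_eq_self ψ p]
    exact (φ n).integral_normed
  have hIntU : Integrable (fun s : ℝ => ψ (s - p) • U s) := by
    have hc : Continuous fun s : ℝ => ψ (s - p) • U s :=
      (hψcont.comp (continuous_id.sub continuous_const)).smul hUcont
    have hcs : HasCompactSupport fun s : ℝ => ψ (s - p) :=
      hψcs.comp_homeomorph (Homeomorph.subRight p)
    exact hc.integrable_of_hasCompactSupport hcs.smul_right
  have hIntUp : Integrable (fun s : ℝ => ψ (s - p) • U p) := hInt1.smul_const (U p)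
  have hsplit : (∫ s : ℝ, ψ (s - p) • (U s - U p))
      = (∫ s : ℝ, ψ (s - p) • U s) - U p := by
    have h1 : (fun s : ℝ => ψ (s - p) • (U s - U p))
        = fun s : ℝ => ψ (s - p) • U s - ψ (s - p) • U p := by
      funext s; rw [smul_sub]
    rw [h1, integral_sub hIntU hIntUp, integral_smul_const, hint1, one_smul]
  rw [dist_eq_norm, ← hsplit]
  have hbound : ‖∫ s : ℝ, ψ (s - p) • (U s - U p)‖ ≤ ∫ s : ℝ, ψ (s - p) * (ε / 2) := by
    apply norm_integral_le_of_norm_le (hInt1.mul_const (ε / 2))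
    filter_upwards with s
    rw [norm_smul, Real.norm_eq_abs, abs_of_nonneg ((φ n).nonneg_normed _)]
    show ψ (s - p) * ‖U s - U p‖ ≤ ψ (s - p) * (ε / 2)
    by_cases hs : ψ (s - p) = 0
    · rw [hs, zero_mul, zero_mul]
    · have hmem : s - p ∈ Metric.ball (0 : ℝ) (φ n).rOut := by
        rw [← (φ n).support_normed_eq (μ := volume)]
        exact hs
      apply mul_le_mul_of_nonneg_left _ ((φ n).nonneg_normed _)
      have hdist : dist s p < δ := by
        rw [Real.dist_eq]
        have := Metric.mem_ball.mp hmem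
        rw [Real.dist_eq, sub_zero] at this
        linarith
      have := hδ hdist
      rw [dist_eq_norm] at this
      exact this.le
  calc ‖∫ s : ℝ, ψ (s - p) • (U s - U p)‖ ≤ ∫ s : ℝ, ψ (s - p) * (ε / 2) := hbound
    _ = (∫ s : ℝ, ψ (s - p)) * (ε / 2) := by rw [integral_mul_const]
    _ = ε / 2 := by rw [hint1, one_mul]
    _ < ε := half_lt_self hε

end Stmt3Aux

/-- uniqueness of weak solutions for a `C₀`-group.
`S` is a strongly continuous one-parameter group of bounded operators on a Hilbert space
`H`; its infinitesimal generator `A` has domain `DA = {x | t ↦ S(t)x is differentiable at 0}`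
and `A x` is the derivative at `0`.  If `U ∈ C⁰(ℝ, H)` satisfies `U(0) = U₀` and, for every
`ψ ∈ C₀¹(ℝ)`, `∫ ψ(t) U(t) dt ∈ D(A)` with `A(∫ ψ(t)U(t)dt) = -∫ ψ'(t)U(t)dt`, then
`U(t) = S(t)U₀` for all `t`. -/
theorem stmt3 {H : Type*} [NormedAddCommGroup H] [InnerProductSpace ℝ H] [CompleteSpace H]
    (Sg : ℝ → H →L[ℝ] H)
    (hS0 : Sg 0 = ContinuousLinearMap.id ℝ H)
    (hSadd : ∀ s t : ℝ, Sg (s + t) = (Sg s).comp (Sg t))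
    (hScont : ∀ x : H, Continuous fun t => Sg t x)
    (DA : Set H) (A : H → H)
    (hDA : ∀ x : H, x ∈ DA ↔ ∃ L : H, HasDerivAt (fun t => Sg t x) L 0)
    (hA : ∀ x ∈ DA, HasDerivAt (fun t => Sg t x) (A x) 0)
    (U : ℝ → H) (hUcont : Continuous U) (U0 : H) (hU0 : U 0 = U0)
    (hweak : ∀ ψ : ℝ → ℝ, ContDiff ℝ 1 ψ → HasCompactSupport ψ →
      (∫ t : ℝ, ψ t • U t) ∈ DA ∧
        A (∫ t : ℝ, ψ t • U t) = -∫ t : ℝ, deriv ψ t • U t) :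
    ∀ t : ℝ, U t = Sg t U0 := by
  intro t
  set φ : ℕ → ContDiffBump (0 : ℝ) := fun n =>
    ⟨((n : ℝ) + 1)⁻¹ / 2, ((n : ℝ) + 1)⁻¹, by positivity, half_lt_self (by positivity)⟩
    with hφdef
  have hk : ∀ n : ℕ, (∫ s : ℝ, (φ n).normed volume (s - t) • U s)
      = Sg t (∫ s : ℝ, (φ n).normed volume s • U s) := fun n =>
    stmt3_key Sg hS0 hSadd hScont DA A hA U hUcont hweak _
      ((φ n).contDiff_normed) ((φ n).hasCompactSupport_normed) t
  have h1 : Tendsto (fun n => ∫ s : ℝ, (φ n).normed volume (s - t) • U s)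
      atTop (𝓝 (U t)) := stmt3_approx U hUcont φ (fun n => rfl) t
  have h0 : Tendsto (fun n => ∫ s : ℝ, (φ n).normed volume (s - 0) • U s)
      atTop (𝓝 (U 0)) := stmt3_approx U hUcont φ (fun n => rfl) 0
  have h0' : Tendsto (fun n => Sg t (∫ s : ℝ, (φ n).normed volume s • U s))
      atTop (𝓝 (Sg t U0)) := by
    have h0'' : Tendsto (fun n => ∫ s : ℝ, (φ n).normed volume s • U s)
        atTop (𝓝 U0) := by
      rw [← hU0]
      simpa [sub_zero] using h0
    exact ((Sg t).continuous.tendsto U0).comp h0''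
  have h1' : Tendsto (fun n => Sg t (∫ s : ℝ, (φ n).normed volume s • U s))
      atTop (𝓝 (U t)) := by
    apply h1.congr
    intro n
    exact hk n
  exact tendsto_nhds_unique h1' h0'
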